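/- Let G = (V, E) be a hypergraph with a distinguished goal hyperedge e* ∈ E, and construct the hypergraph G' = (e*, E') where E' = {e*} ∪ {(V \ e) ∩ e* : e ∈ E, e ≠ e*}. Then for every nonempty set S ⊆ e*, S is a feasible solution of the unique hyperedge problem on (G, e*) if and only if S is a hitting set of G'. -/

import Mathlib

/-!
For `S ⊆ e*`, the trace `eᶜ ∩ e*` of a hyperedge `e` is missed by `S` exactly when `S ⊆ e`.
So `S` hits every trace of a hyperedge `e ≠ e*` iff no such `e` contains `S`, and `S` hits
`e*` itself because it is nonempty.
-/

theorem Set.inter_compl_inter_nonempty_iff {α : Type*} {s t u : Set α} (hsu : s ⊆ u) :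
    (s ∩ (tᶜ ∩ u)).Nonempty ↔ ¬s ⊆ t := by
  rw [← Set.inter_assoc, ← Set.sdiff_eq, Set.inter_eq_left.mpr (Set.sdiff_subset.trans hsu),
    Set.sdiff_nonempty]

theorem unique_hyperedge_iff_hitting_set (V : Type*)
    (E : Set (Set V)) (estar : Set V)
    (S : Set V) (hS : S.Nonempty) (hSsub : S ⊆ estar) :
    (∀ e ∈ E, S ⊆ e → e = estar)
      ↔
    (∀ f ∈ ({estar} : Set (Set V)) ∪
        {f | ∃ e ∈ E, e ≠ estar ∧ f = eᶜ ∩ estar}, (S ∩ f).Nonempty) := by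
  have hS_meets_estar : (S ∩ estar).Nonempty := by rwa [Set.inter_eq_left.mpr hSsub]
  constructor
  · rintro hunique f (rfl | ⟨e, he, hne, rfl⟩)
    · exact hS_meets_estar
    · exact (Set.inter_compl_inter_nonempty_iff hSsub).mpr fun hSe ↦ hne (hunique e he hSe)
  · intro hhits e he hSe
    by_contra hne
    exact (Set.inter_compl_inter_nonempty_iff hSsub).mp (hhits _ (.inr ⟨e, he, hne, rfl⟩)) hSe
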